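/- arXiv:2009.13236 — 2 statements merged into one kernel-verified Lean document; each statement's English description precedes it below -/
import Mathlib

section
/- Let H, 𝓗 be Hilbert spaces with 𝓗 a unitary realisation of H*, let W_j →^M W be Mosco-convergent closed subspaces of H, and let A : H → 𝓗 be compactly perturbed coercive and invertible on W. Then there exists J such that for all j ≥ J, A is invertible on W_j, and sup_{j≥J} ‖(P_{𝓦_j} A|_{W_j})^{-1}‖ < ∞; moreover for any f ∈ 𝓗, the Galerkin solutions u_{W_j} := (P_{𝓦_j} A|_{W_j})^{-1} f converge in norm to u_W := (P_𝓦 A|_W)^{-1} f. -/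
/-!
The form `B u v = J (A u) v` satisfies the Gårding inequality `α‖u‖² ≤ ‖B u u‖ + ‖K u u‖` with
`K = J ∘ A₁` compact. Since compact operators turn weak into norm convergence, a bounded sequence
with `x n ⇀ 0` and `B (x n) (x n) → 0` tends to `0` in norm. By Mosco convergence, weak limits
of approximate Galerkin solutions on the `W_j` solve the problem on `W`, so they are its unique
solution.

If there were no uniform discrete inf-sup constant, unit vectors with vanishing residuals on the
`W_j` would tend weakly to the unique solution `0` on `W`, hence in norm, which is absurd. The
transposed form satisfies the same Gårding inequality and is injective on `W` because `B` is
onto there, so it has a uniform inf-sup constant as well; the two conditions make the Galerkin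
problems uniquely solvable with inverses bounded by `β⁻¹`. Finally, if `w_j ∈ W_j` tend to `u`,
then `u_j - w_j ⇀ 0` and `B (u_j - w_j) (u_j - w_j) = f (u_j - w_j) - B w_j (u_j - w_j) → 0`,
so `u_j → u` in norm.
-/

open Filter Topology

section WeakConvergence

variable {𝕜 : Type*} [RCLike 𝕜]

theorem exists_subseq_weak_tendsto_of_separableSpace {E : Type*} [NormedAddCommGroup E]
    [InnerProductSpace 𝕜 E] [CompleteSpace E] [TopologicalSpace.SeparableSpace E]
    {x : ℕ → E} {R : ℝ} (hx : ∀ n, ‖x n‖ ≤ R) :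
    ∃ x₀ : E, ∃ φ : ℕ → ℕ, StrictMono φ ∧
      ∀ ψ : StrongDual 𝕜 E, Tendsto (fun n => ψ (x (φ n))) atTop (𝓝 (ψ x₀)) := by
  let toDual := InnerProductSpace.toDual 𝕜 E
  have hmem : ∀ n, StrongDual.toWeakDual (toDual (x n)) ∈
      WeakDual.toStrongDual ⁻¹' Metric.closedBall (0 : StrongDual 𝕜 E) R := by
    intro n
    simpa [toDual] using hx n
  obtain ⟨a, -, φ, hφ, ha⟩ := WeakDual.isSeqCompact_closedBall 𝕜 E 0 R hmem
  refine ⟨toDual.symm (WeakDual.toStrongDual a), φ, hφ, fun ψ => ?_⟩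
  obtain ⟨g, rfl⟩ := toDual.surjective ψ
  have hg := (RCLike.continuous_conj.tendsto _).comp
    (((WeakDual.eval_continuous g).tendsto a).comp ha)
  convert hg using 1
  · ext n
    simp [toDual]
  · simp only [toDual, InnerProductSpace.toDual_apply_apply]
    rw [← inner_conj_symm, InnerProductSpace.toDual_symm_apply]
    rfl

theorem exists_subseq_weak_tendsto {E : Type*} [NormedAddCommGroup E]
    [InnerProductSpace 𝕜 E] [CompleteSpace E] {x : ℕ → E} {R : ℝ} (hx : ∀ n, ‖x n‖ ≤ R) :
    ∃ x₀ : E, ∃ φ : ℕ → ℕ, StrictMono φ ∧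
      ∀ ψ : StrongDual 𝕜 E, Tendsto (fun n => ψ (x (φ n))) atTop (𝓝 (ψ x₀)) := by
  set S := Submodule.span 𝕜 (Set.range x)
  set K := S.topologicalClosure
  have : TopologicalSpace.SeparableSpace K :=
    (Set.countable_range x).isSeparable.span.closure.separableSpace
  have : CompleteSpace K := S.isClosed_topologicalClosure.completeSpace_coe
  let y : ℕ → K := fun n => ⟨x n, S.le_topologicalClosure (Submodule.subset_span ⟨n, rfl⟩)⟩
  obtain ⟨y₀, φ, hφ, hy⟩ := exists_subseq_weak_tendsto_of_separableSpace (𝕜 := 𝕜) (x := y) hx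
  exact ⟨y₀, φ, hφ, fun ψ => hy (ψ.comp K.subtypeL)⟩

variable {E F : Type*} [NormedAddCommGroup E] [NormedSpace 𝕜 E]
  [NormedAddCommGroup F] [NormedSpace 𝕜 F]

theorem IsCompactOperator.tendsto_of_weak_tendsto {T : E →L[𝕜] F} (hT : IsCompactOperator T)
    {x : ℕ → E} {x₀ : E} {R : ℝ} (hx : ∀ n, ‖x n‖ ≤ R)
    (hw : ∀ ψ : StrongDual 𝕜 E, Tendsto (fun n => ψ (x n)) atTop (𝓝 (ψ x₀))) :
    Tendsto (fun n => T (x n)) atTop (𝓝 (T x₀)) := by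
  obtain ⟨C, hC, hTC⟩ :=
    IsCompactOperator.image_subset_compact_of_bounded (f := (T : E →ₗ[𝕜] F)) hT
      (isBounded_iff_forall_norm_le.2 ⟨R, Set.forall_mem_range.2 hx⟩)
  refine hC.tendsto_nhds_of_unique_mapClusterPt
    (Eventually.of_forall fun n => hTC ⟨x n, ⟨n, rfl⟩, rfl⟩) fun y _ hy => ?_
  refine (SeparatingDual.eq_iff_forall_dual_eq (R := 𝕜)).2 fun ψ => ?_
  have hψy : MapClusterPt (ψ y) atTop (fun n => ψ (T (x n))) :=
    hy.continuousAt_comp ψ.continuous.continuousAt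
  exact eq_of_nhds_neBot (hψy.neBot.mono (inf_le_inf_left _ (hw (ψ.comp T))))

theorem tendsto_apply_of_tendsto_of_weak_tendsto {L : ℕ → StrongDual 𝕜 E} {L₀ : StrongDual 𝕜 E}
    (hL : Tendsto L atTop (𝓝 L₀)) {x : ℕ → E} {x₀ : E} {R : ℝ} (hx : ∀ n, ‖x n‖ ≤ R)
    (hw : ∀ ψ : StrongDual 𝕜 E, Tendsto (fun n => ψ (x n)) atTop (𝓝 (ψ x₀))) :
    Tendsto (fun n => L n (x n)) atTop (𝓝 (L₀ x₀)) := by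
  have hsmall : Tendsto (fun n => (L n - L₀) (x n)) atTop (𝓝 0) := by
    refine squeeze_zero_norm (fun n => ((L n - L₀).le_opNorm (x n)).trans
      (mul_le_mul_of_nonneg_left (hx n) (norm_nonneg _))) ?_
    simpa using (tendsto_iff_norm_sub_tendsto_zero.1 hL).mul_const R
  simpa using hsmall.add (hw L₀)

theorem tendsto_zero_of_weak_tendsto_zero_of_garding {B : E →L[𝕜] E →L[𝕜] 𝕜}
    {K : E →L[𝕜] StrongDual 𝕜 E} (hK : IsCompactOperator K) {α : ℝ} (hα : 0 < α)
    (hgarding : ∀ u, α * ‖u‖ ^ 2 ≤ ‖B u u‖ + ‖K u u‖) {x : ℕ → E} {R : ℝ}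
    (hx : ∀ n, ‖x n‖ ≤ R) (hw : ∀ ψ : StrongDual 𝕜 E, Tendsto (fun n => ψ (x n)) atTop (𝓝 0))
    (hBx : Tendsto (fun n => B (x n) (x n)) atTop (𝓝 0)) : Tendsto x atTop (𝓝 0) := by
  have hw₀ : ∀ ψ : StrongDual 𝕜 E, Tendsto (fun n => ψ (x n)) atTop (𝓝 (ψ 0)) := by
    simpa using hw
  have hKx : Tendsto (fun n => K (x n) (x n)) atTop (𝓝 0) := by
    simpa using tendsto_apply_of_tendsto_of_weak_tendsto (hK.tendsto_of_weak_tendsto hx hw₀) hx hw₀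
  have hsq : Tendsto (fun n => ‖x n‖ ^ 2) atTop (𝓝 0) := by
    refine squeeze_zero (fun n => by positivity) (fun n => (le_div_iff₀' hα).2 (hgarding (x n))) ?_
    simpa using (hBx.norm.add hKx.norm).div_const α
  simpa [tendsto_zero_iff_norm_tendsto_zero, Real.sqrt_sq (norm_nonneg _)] using hsq.sqrt

end WeakConvergence

section Mosco

variable {𝕜 E : Type*} [RCLike 𝕜] [NormedAddCommGroup E] [NormedSpace 𝕜 E]

structure MoscoConverges (Wj : ℕ → Submodule 𝕜 E) (W : Submodule 𝕜 E) : Prop where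
  exists_tendsto : ∀ w ∈ W, ∃ u : ℕ → E, (∀ j, u j ∈ Wj j) ∧ Tendsto u atTop (𝓝 w)
  mem_of_weak_tendsto : ∀ jm : ℕ → ℕ, StrictMono jm → ∀ (wm : ℕ → E) (w : E),
    (∀ m, wm m ∈ Wj (jm m)) →
    (∀ ψ : StrongDual 𝕜 E, Tendsto (fun m => ψ (wm m)) atTop (𝓝 (ψ w))) → w ∈ W

/-- The paper's `P_𝓦 A|_V u = f`, with `B u v = J (A u) v` and `ψ = J f`. -/
def IsGalerkinSolution (B : E →L[𝕜] E →L[𝕜] 𝕜) (ψ : StrongDual 𝕜 E) (V : Submodule 𝕜 E)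
    (u : E) : Prop :=
  u ∈ V ∧ ∀ v ∈ V, B u v = ψ v

variable {Wj : ℕ → Submodule 𝕜 E} {W : Submodule 𝕜 E}

theorem MoscoConverges.shift (hM : MoscoConverges Wj W) (k : ℕ) :
    MoscoConverges (fun j => Wj (j + k)) W where
  exists_tendsto w hw := by
    obtain ⟨u, huW, hu⟩ := hM.exists_tendsto w hw
    exact ⟨fun j => u (j + k), fun j => huW _, hu.comp (tendsto_add_atTop_nat k)⟩
  mem_of_weak_tendsto jm hjm wm w hwm hw :=
    hM.mem_of_weak_tendsto (fun m => jm m + k) (hjm.add_const k) wm w hwm hw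

theorem IsGalerkinSolution.comp_subtypeL_eq {B : E →L[𝕜] E →L[𝕜] 𝕜} {ψ : StrongDual 𝕜 E}
    {V : Submodule 𝕜 E} {u : E} (h : IsGalerkinSolution B ψ V u) :
    (B u).comp V.subtypeL = ψ.comp V.subtypeL :=
  ContinuousLinearMap.ext fun v => h.2 v v.2

theorem IsGalerkinSolution.mul_norm_le {B : E →L[𝕜] E →L[𝕜] 𝕜} {ψ : StrongDual 𝕜 E}
    {V : Submodule 𝕜 E} {u : E} (h : IsGalerkinSolution B ψ V u) {β : ℝ}
    (hβ : β * ‖u‖ ≤ ‖(B u).comp V.subtypeL‖) : β * ‖u‖ ≤ ‖ψ‖ :=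
  calc β * ‖u‖ ≤ ‖ψ.comp V.subtypeL‖ := h.comp_subtypeL_eq ▸ hβ
    _ ≤ ‖ψ‖ * ‖V.subtypeL‖ := ψ.opNorm_comp_le _
    _ ≤ ‖ψ‖ := mul_le_of_le_one_right (norm_nonneg _) V.norm_subtypeL_le

theorem MoscoConverges.isGalerkinSolution_of_weak_tendsto (hM : MoscoConverges Wj W)
    (B : E →L[𝕜] E →L[𝕜] 𝕜) (ψ : StrongDual 𝕜 E) {jm : ℕ → ℕ} (hjm : StrictMono jm)
    {x : ℕ → E} {x₀ : E} {R : ℝ} (hxW : ∀ m, x m ∈ Wj (jm m)) (hx : ∀ m, ‖x m‖ ≤ R)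
    (hw : ∀ φ : StrongDual 𝕜 E, Tendsto (fun m => φ (x m)) atTop (𝓝 (φ x₀)))
    (hres : Tendsto (fun m => ‖(B (x m) - ψ).comp (Wj (jm m)).subtypeL‖) atTop (𝓝 0)) :
    IsGalerkinSolution B ψ W x₀ := by
  refine ⟨hM.mem_of_weak_tendsto jm hjm x x₀ hxW hw, fun ω hω => ?_⟩
  obtain ⟨ωj, hωjW, hωj⟩ := hM.exists_tendsto ω hω
  have hω' : Tendsto (fun m => ωj (jm m)) atTop (𝓝 ω) := hωj.comp hjm.tendsto_atTop
  have hlim : Tendsto (fun m => (B (x m) - ψ) (ωj (jm m))) atTop (𝓝 (B x₀ ω - ψ ω)) :=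
    (tendsto_apply_of_tendsto_of_weak_tendsto ((B.flip.continuous.tendsto ω).comp hω') hx hw).sub
      ((ψ.continuous.tendsto ω).comp hω')
  have hzero : Tendsto (fun m => (B (x m) - ψ) (ωj (jm m))) atTop (𝓝 0) := by
    refine squeeze_zero_norm (fun m => ?_) (by simpa using hres.mul hω'.norm)
    exact ((B (x m) - ψ).comp (Wj (jm m)).subtypeL).le_opNorm ⟨_, hωjW (jm m)⟩
  exact sub_eq_zero.1 (tendsto_nhds_unique hlim hzero)

end Mosco

section Hilbert

variable {𝕜 E : Type*} [RCLike 𝕜] [NormedAddCommGroup E] [InnerProductSpace 𝕜 E]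

theorem surjective_of_bounded_below_of_flip_injective [CompleteSpace E]
    {B : E →L[𝕜] E →L[𝕜] 𝕜} {β : ℝ} (hβ : 0 < β)
    (hB : ∀ u, β * ‖u‖ ≤ ‖B u‖) (hflip : ∀ z, B.flip z = 0 → z = 0) :
    Function.Surjective B := by
  -- `T u` is the Riesz representative of `B u`: its range is closed since `T` is bounded below,
  -- and its orthogonal complement is the kernel of `B.flip`.
  let toDual := InnerProductSpace.toDual 𝕜 E
  let T : E →SL[starRingEnd 𝕜] E :=
    (toDual.symm.toContinuousLinearEquiv : StrongDual 𝕜 E →SL[starRingEnd 𝕜] E).comp B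
  have hT : ∀ u v, inner 𝕜 (T u) v = B u v := fun u v => InnerProductSpace.toDual_symm_apply
  have hTclosed : IsClosed (LinearMap.range (T : E →ₛₗ[starRingEnd 𝕜] E) : Set E) := by
    refine (T.antilipschitz_of_bound (K := (Real.toNNReal β⁻¹)) fun u => ?_).isClosed_range
      T.uniformContinuous
    rw [Real.coe_toNNReal _ (inv_nonneg.2 hβ.le), ← div_eq_inv_mul, le_div_iff₀' hβ]
    simpa [T, toDual] using hB u
  have hrange : LinearMap.range (T : E →ₛₗ[starRingEnd 𝕜] E) = ⊤ := by
    rw [← hTclosed.submodule_topologicalClosure_eq, Submodule.topologicalClosure_eq_top_iff,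
      Submodule.eq_bot_iff]
    intro z hz
    refine hflip z (ContinuousLinearMap.ext fun u => ?_)
    rw [ContinuousLinearMap.flip_apply, ← hT]
    exact Submodule.inner_right_of_mem_orthogonal (LinearMap.mem_range_self _ u) hz
  intro φ
  obtain ⟨u, hu⟩ := LinearMap.range_eq_top.1 hrange (toDual.symm φ)
  exact ⟨u, toDual.symm.injective hu⟩

theorem existsUnique_isGalerkinSolution {B : E →L[𝕜] E →L[𝕜] 𝕜} {V : Submodule 𝕜 E}
    [CompleteSpace V] {β β' : ℝ} (hβ : 0 < β) (hβ' : 0 < β')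
    (hB : ∀ u ∈ V, β * ‖u‖ ≤ ‖(B u).comp V.subtypeL‖)
    (hBt : ∀ u ∈ V, β' * ‖u‖ ≤ ‖(B.flip u).comp V.subtypeL‖) (ψ : StrongDual 𝕜 E) :
    ∃! u, IsGalerkinSolution B ψ V u := by
  have eq_zero : ∀ {γ : ℝ} {u : E} {L : V →L[𝕜] 𝕜}, 0 < γ → γ * ‖u‖ ≤ ‖L‖ → L = 0 → u = 0 := by
    rintro γ u L hγ h rfl
    exact norm_le_zero_iff.1 (nonpos_of_mul_nonpos_right (h.trans_eq norm_zero) hγ)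
  obtain ⟨u, hu⟩ := surjective_of_bounded_below_of_flip_injective
    (B := B.bilinearComp V.subtypeL V.subtypeL) hβ (fun u => hB u u.2)
    (fun z hz => Subtype.ext (eq_zero hβ' (hBt z z.2) hz)) (ψ.comp V.subtypeL)
  refine ⟨u, ⟨u.2, fun v hv => congrArg (· ⟨v, hv⟩) hu⟩, fun y hy => ?_⟩
  refine sub_eq_zero.1
    (eq_zero hβ (hB _ (V.sub_mem hy.1 u.2)) (ContinuousLinearMap.ext fun v => ?_))
  have huv : B u v = ψ v := congrArg (· v) hu
  simp [hy.2 v v.2, huv]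

variable [CompleteSpace E] {Wj : ℕ → Submodule 𝕜 E} {W : Submodule 𝕜 E}

theorem MoscoConverges.weak_tendsto_of_residual_tendsto_zero (hM : MoscoConverges Wj W)
    {B : E →L[𝕜] E →L[𝕜] 𝕜} {ψ : StrongDual 𝕜 E} {u : E}
    (huniq : ∀ y, IsGalerkinSolution B ψ W y → y = u) {jm : ℕ → ℕ} (hjm : StrictMono jm)
    {x : ℕ → E} {R : ℝ} (hxW : ∀ m, x m ∈ Wj (jm m)) (hx : ∀ m, ‖x m‖ ≤ R)
    (hres : Tendsto (fun m => ‖(B (x m) - ψ).comp (Wj (jm m)).subtypeL‖) atTop (𝓝 0))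
    (φ : StrongDual 𝕜 E) : Tendsto (fun m => φ (x m)) atTop (𝓝 (φ u)) := by
  refine tendsto_of_subseq_tendsto fun ns hns => ?_
  obtain ⟨μ, -, hμ⟩ := strictMono_subseq_of_tendsto_atTop hns
  obtain ⟨y, ν, hν, hy⟩ :=
    exists_subseq_weak_tendsto (𝕜 := 𝕜) (x := fun i => x (ns (μ i))) fun i => hx _
  have hsub : StrictMono (ns ∘ μ ∘ ν) := hμ.comp hν
  have hyu : y = u := huniq y <| hM.isGalerkinSolution_of_weak_tendsto B ψ (hjm.comp hsub)
    (fun i => hxW _) (fun i => hx _) hy (hres.comp hsub.tendsto_atTop)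
  exact ⟨μ ∘ ν, hyu ▸ hy φ⟩

theorem MoscoConverges.exists_eventually_infSup (hM : MoscoConverges Wj W)
    {B : E →L[𝕜] E →L[𝕜] 𝕜} {K : E →L[𝕜] StrongDual 𝕜 E} (hK : IsCompactOperator K)
    {α : ℝ} (hα : 0 < α) (hgarding : ∀ u, α * ‖u‖ ^ 2 ≤ ‖B u u‖ + ‖K u u‖)
    (hinj : ∀ y, IsGalerkinSolution B 0 W y → y = 0) :
    ∃ β > 0, ∀ᶠ j in atTop, ∀ u ∈ Wj j, β * ‖u‖ ≤ ‖(B u).comp (Wj j).subtypeL‖ := by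
  by_contra! hcon
  have hunit : ∀ n : ℕ, ∃ᶠ j in atTop, ∃ u ∈ Wj j, ‖u‖ = 1 ∧
      ‖(B u).comp (Wj j).subtypeL‖ < 1 / (n + 1 : ℝ) := by
    intro n
    refine (hcon (1 / (n + 1 : ℝ)) (by positivity)).mono fun j ⟨u, huW, hu⟩ => ?_
    have hu0 : u ≠ 0 := by
      rintro rfl
      simp at hu
    refine ⟨(‖u‖⁻¹ : 𝕜) • u, (Wj j).smul_mem _ huW, by simp [norm_smul, hu0], ?_⟩
    rw [map_smul, ContinuousLinearMap.smul_comp, norm_smul, norm_inv, RCLike.norm_ofReal, abs_norm,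
      inv_mul_lt_iff₀ (norm_pos_iff.2 hu0), mul_comm]
    exact hu
  obtain ⟨jm, hjm, hu⟩ := extraction_forall_of_frequently hunit
  choose u huW hunorm hures using hu
  have hres : Tendsto (fun m => ‖(B (u m) - 0).comp (Wj (jm m)).subtypeL‖) atTop (𝓝 0) :=
    squeeze_zero (fun _ => norm_nonneg _) (fun m => by simpa using (hures m).le)
      tendsto_one_div_add_atTop_nhds_zero_nat
  have hw := hM.weak_tendsto_of_residual_tendsto_zero hinj hjm huW (fun m => (hunorm m).le) hres
  have hBu : Tendsto (fun m => B (u m) (u m)) atTop (𝓝 0) := by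
    refine squeeze_zero_norm (fun m => ?_) (by simpa using hres)
    simpa [hunorm m] using ((B (u m)).comp (Wj (jm m)).subtypeL).le_opNorm ⟨_, huW m⟩
  have h0 := (tendsto_zero_of_weak_tendsto_zero_of_garding hK hα hgarding
    (fun m => (hunorm m).le) (by simpa using hw) hBu).norm
  simp only [hunorm, norm_zero] at h0
  exact one_ne_zero (tendsto_nhds_unique tendsto_const_nhds h0)

theorem MoscoConverges.tendsto_of_isGalerkinSolution (hM : MoscoConverges Wj W)
    {B : E →L[𝕜] E →L[𝕜] 𝕜} {K : E →L[𝕜] StrongDual 𝕜 E} (hK : IsCompactOperator K)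
    {α : ℝ} (hα : 0 < α) (hgarding : ∀ u, α * ‖u‖ ^ 2 ≤ ‖B u u‖ + ‖K u u‖)
    {ψ : StrongDual 𝕜 E} {u : E} (huW : u ∈ W) (huniq : ∀ y, IsGalerkinSolution B ψ W y → y = u)
    {x : ℕ → E} {R : ℝ} (hx : ∀ j, IsGalerkinSolution B ψ (Wj j) (x j)) (hxR : ∀ j, ‖x j‖ ≤ R) :
    Tendsto x atTop (𝓝 u) := by
  obtain ⟨w, hwW, hw⟩ := hM.exists_tendsto u huW
  obtain ⟨Rw, hRw⟩ := hw.norm.bddAbove_range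
  have hxu : ∀ φ : StrongDual 𝕜 E, Tendsto (fun j => φ (x j)) atTop (𝓝 (φ u)) :=
    hM.weak_tendsto_of_residual_tendsto_zero huniq strictMono_id (fun j => (hx j).1) hxR
      (by simp [ContinuousLinearMap.sub_comp, (hx _).comp_subtypeL_eq])
  set d := fun j => x j - w j
  have hd : ∀ φ : StrongDual 𝕜 E, Tendsto (fun j => φ (d j)) atTop (𝓝 0) := fun φ => by
    simpa [d] using (hxu φ).sub ((φ.continuous.tendsto u).comp hw)
  have hdR : ∀ j, ‖d j‖ ≤ R + Rw := fun j => norm_sub_le_of_le (hxR j) (hRw ⟨j, rfl⟩)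
  have hBd : Tendsto (fun j => B (d j) (d j)) atTop (𝓝 0) := by
    have hexpand : ∀ j, B (d j) (d j) = ψ (d j) - B (w j) (d j) := fun j => by
      rw [show B (d j) = B (x j) - B (w j) from map_sub B _ _, sub_apply,
        (hx j).2 _ ((Wj j).sub_mem (hx j).1 (hwW j))]
    have hBwd : Tendsto (fun j => B (w j) (d j)) atTop (𝓝 (B u 0)) :=
      tendsto_apply_of_tendsto_of_weak_tendsto ((B.continuous.tendsto u).comp hw) hdR
        (by simpa using hd)
    simpa [hexpand] using (hd ψ).sub hBwd
  simpa [d] using (tendsto_zero_of_weak_tendsto_zero_of_garding hK hα hgarding hdR hd hBd).add hw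

theorem MoscoConverges.galerkin_stable_and_convergent (hM : MoscoConverges Wj W)
    (hWj : ∀ j, IsClosed (Wj j : Set E)) {B : E →L[𝕜] E →L[𝕜] 𝕜}
    {K : E →L[𝕜] StrongDual 𝕜 E} (hK : IsCompactOperator K) {α : ℝ} (hα : 0 < α)
    (hgarding : ∀ u, α * ‖u‖ ^ 2 ≤ ‖B u u‖ + ‖K u u‖)
    (hinvW : ∀ ψ, ∃! u, IsGalerkinSolution B ψ W u) :
    ∃ J₀ : ℕ, (∀ j ≥ J₀, ∀ ψ, ∃! u, IsGalerkinSolution B ψ (Wj j) u) ∧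
      (∃ C : ℝ, ∀ j ≥ J₀, ∀ ψ u, IsGalerkinSolution B ψ (Wj j) u → ‖u‖ ≤ C * ‖ψ‖) ∧
      (∀ ψ u, IsGalerkinSolution B ψ W u → ∀ uj : ℕ → E,
        (∀ j ≥ J₀, IsGalerkinSolution B ψ (Wj j) (uj j)) → Tendsto uj atTop (𝓝 u)) := by
  have hinj : ∀ y, IsGalerkinSolution B 0 W y → y = 0 := fun y hy =>
    (hinvW 0).unique hy ⟨W.zero_mem, by simp⟩
  have hinj_flip : ∀ y, IsGalerkinSolution B.flip 0 W y → y = 0 := fun y hy => by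
    obtain ⟨ω, hω, -⟩ := hinvW (innerSL 𝕜 y)
    have hyy : inner 𝕜 y y = 0 := by
      rw [← innerSL_apply_apply, ← hω.2 y hy.1]
      exact hy.2 ω hω.1
    exact inner_self_eq_zero.1 hyy
  obtain ⟨β, hβ, hinfSup⟩ := hM.exists_eventually_infSup hK hα hgarding hinj
  obtain ⟨β', hβ', hinfSup_flip⟩ :=
    hM.exists_eventually_infSup hK hα (fun u => by simpa using hgarding u) hinj_flip
  obtain ⟨J₀, hJ₀⟩ := (hinfSup.and hinfSup_flip).exists_forall_of_atTop
  have hbound : ∀ j ≥ J₀, ∀ ψ u, IsGalerkinSolution B ψ (Wj j) u → ‖u‖ ≤ β⁻¹ * ‖ψ‖ :=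
    fun j hj ψ u hu => by
      rw [inv_mul_eq_div, le_div_iff₀' hβ]
      exact hu.mul_norm_le ((hJ₀ j hj).1 u hu.1)
  refine ⟨J₀, fun j hj ψ => ?_, ⟨β⁻¹, hbound⟩, fun ψ u hu uj huj => ?_⟩
  · have : CompleteSpace (Wj j) := (hWj j).completeSpace_coe
    exact existsUnique_isGalerkinSolution hβ hβ' (hJ₀ j hj).1 (hJ₀ j hj).2 ψ
  · refine (tendsto_add_atTop_iff_nat J₀).1 <| (hM.shift J₀).tendsto_of_isGalerkinSolution hK hα
      hgarding hu.1 (fun y hy => (hinvW ψ).unique hy hu) (fun j => huj _ (by omega))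
      fun j => hbound _ (by omega) ψ _ (huj _ (by omega))

end Hilbert

theorem stmt_7_general
    {H 𝓗 : Type*}
    [NormedAddCommGroup H] [InnerProductSpace ℂ H] [CompleteSpace H]
    [NormedAddCommGroup 𝓗] [InnerProductSpace ℂ 𝓗] [CompleteSpace 𝓗]
    (J : 𝓗 ≃ₗᵢ[ℂ] StrongDual ℂ H)
    (A A₀ A₁ : H →L[ℂ] 𝓗)
    (hA : A = A₀ + A₁)
    (hcoerc : ∃ α : ℝ, 0 < α ∧ ∀ u : H, α * ‖u‖ ^ 2 ≤ ‖J (A₀ u) u‖)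
    (hcomp : IsCompactOperator (A₁ : H → 𝓗))
    (W : Submodule ℂ H)
    (Wj : ℕ → Submodule ℂ H) (hWj : ∀ j, IsClosed ((Wj j : Set H)))
    (hMosco₁ : ∀ w ∈ W, ∃ u : ℕ → H, (∀ j, u j ∈ Wj j) ∧ Tendsto u atTop (𝓝 w))
    (hMosco₂ : ∀ (jm : ℕ → ℕ), StrictMono jm → ∀ (wm : ℕ → H) (w : H),
      (∀ m, wm m ∈ Wj (jm m)) →
      (∀ v : H, Tendsto (fun m => (inner ℂ (wm m) v : ℂ)) atTop (𝓝 (inner ℂ w v))) →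
      w ∈ W)
    (hinvW : ∀ f : 𝓗, ∃! u : H, u ∈ W ∧ ∀ v ∈ W, J (A u) v = J f v) :
    ∃ J₀ : ℕ,
      (∀ j ≥ J₀, ∀ f : 𝓗, ∃! u : H, u ∈ Wj j ∧ ∀ v ∈ Wj j, J (A u) v = J f v) ∧
      (∃ C : ℝ, ∀ j ≥ J₀, ∀ (f : 𝓗) (u : H), u ∈ Wj j →
        (∀ v ∈ Wj j, J (A u) v = J f v) → ‖u‖ ≤ C * ‖f‖) ∧
      (∀ (f : 𝓗) (u : H), u ∈ W → (∀ v ∈ W, J (A u) v = J f v) →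
        ∀ uj : ℕ → H,
          (∀ j ≥ J₀, uj j ∈ Wj j ∧ ∀ v ∈ Wj j, J (A (uj j)) v = J f v) →
          Tendsto uj atTop (𝓝 u)) := by
  obtain ⟨α, hα, hcoerc⟩ := hcoerc
  let J' : 𝓗 →L[ℂ] StrongDual ℂ H := J.toContinuousLinearEquiv
  have hM : MoscoConverges Wj W := ⟨hMosco₁, fun jm hjm wm w hwm hw =>
    hMosco₂ jm hjm wm w hwm fun v => by simpa using (hw (innerSL ℂ v)).star⟩
  have hgarding : ∀ u, α * ‖u‖ ^ 2 ≤ ‖J' (A u) u‖ + ‖J' (A₁ u) u‖ := fun u => by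
    have hsplit : J (A₀ u) u = J' (A u) u - J' (A₁ u) u := by simp [J', hA]
    exact (hcoerc u).trans (hsplit ▸ norm_sub_le _ _)
  obtain ⟨J₀, hsolve, ⟨C, hbound⟩, hconv⟩ :=
    hM.galerkin_stable_and_convergent hWj (B := J'.comp A) (K := J'.comp A₁)
      (hcomp.clm_comp J') hα hgarding fun ψ => by
        simpa [IsGalerkinSolution, J'] using hinvW (J.symm ψ)
  refine ⟨J₀, fun j hj f => hsolve j hj (J f), ⟨C, fun j hj f u hu hsol => ?_⟩,
    fun f u hu hsol => hconv (J f) u ⟨hu, hsol⟩⟩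
  simpa using hbound j hj (J f) u ⟨hu, hsol⟩

/-- Lemma 2.5 of the paper: Let `H`, `𝓗` be Hilbert spaces with `𝓗` a unitary
realisation of `H*` via `J`, let closed subspaces `W_j` Mosco-converge to the closed subspace
`W`, and let `A = A₀ + A₁ : H → 𝓗` be compactly perturbed coercive and invertible on `W`
(expressed variationally: for every `f ∈ 𝓗` the problem `⟨A u, v⟩ = ⟨f, v⟩ ∀ v ∈ W` has a
unique solution `u ∈ W`).  Then there is `J₀` such that for all `j ≥ J₀` the operator `A` is
invertible on `W_j`, the inverses are uniformly bounded (`‖u‖ ≤ C ‖f‖` for the Galerkin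
solution `u` on `W_j`), and for each `f ∈ 𝓗` the Galerkin solutions `u_{W_j}` converge in
norm to the solution `u_W` on `W`. -/
theorem stmt_7
    {H 𝓗 : Type*}
    [NormedAddCommGroup H] [InnerProductSpace ℂ H] [CompleteSpace H]
    [NormedAddCommGroup 𝓗] [InnerProductSpace ℂ 𝓗] [CompleteSpace 𝓗]
    (J : 𝓗 ≃ₗᵢ[ℂ] StrongDual ℂ H)
    (A A₀ A₁ : H →L[ℂ] 𝓗)
    (hA : A = A₀ + A₁)
    (hcoerc : ∃ α : ℝ, 0 < α ∧ ∀ u : H, α * ‖u‖ ^ 2 ≤ ‖J (A₀ u) u‖)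
    (hcomp : IsCompactOperator (A₁ : H → 𝓗))
    (W : Submodule ℂ H) (hW : IsClosed (W : Set H))
    (Wj : ℕ → Submodule ℂ H) (hWj : ∀ j, IsClosed ((Wj j : Set H)))
    (hMosco₁ : ∀ w ∈ W, ∃ u : ℕ → H, (∀ j, u j ∈ Wj j) ∧ Tendsto u atTop (𝓝 w))
    (hMosco₂ : ∀ (jm : ℕ → ℕ), StrictMono jm → ∀ (wm : ℕ → H) (w : H),
      (∀ m, wm m ∈ Wj (jm m)) →
      (∀ v : H, Tendsto (fun m => (inner ℂ (wm m) v : ℂ)) atTop (𝓝 (inner ℂ w v))) →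
      w ∈ W)
    (hinvW : ∀ f : 𝓗, ∃! u : H, u ∈ W ∧ ∀ v ∈ W, J (A u) v = J f v) :
    ∃ J₀ : ℕ,
      (∀ j ≥ J₀, ∀ f : 𝓗, ∃! u : H, u ∈ Wj j ∧ ∀ v ∈ Wj j, J (A u) v = J f v) ∧
      (∃ C : ℝ, ∀ j ≥ J₀, ∀ (f : 𝓗) (u : H), u ∈ Wj j →
        (∀ v ∈ Wj j, J (A u) v = J f v) → ‖u‖ ≤ C * ‖f‖) ∧
      (∀ (f : 𝓗) (u : H), u ∈ W → (∀ v ∈ W, J (A u) v = J f v) →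
        ∀ uj : ℕ → H,
          (∀ j ≥ J₀, uj j ∈ Wj j ∧ ∀ v ∈ Wj j, J (A (uj j)) v = J f v) →
          Tendsto uj atTop (𝓝 u)) :=
  stmt_7_general J A A₀ A₁ hA hcoerc hcomp W Wj hWj hMosco₁ hMosco₂ hinvW
end

section
/- Let (W_j) be closed subspaces of a Hilbert space H with W_j →^M W (Mosco), and let V_j ⊆ W_j be closed subspaces such that there is a dense subspace W̃ ⊆ W with inf_{v ∈ V_j} ‖w − v‖ → 0 as j → ∞ for every w ∈ W̃. Then V_j →^M W. -/
open Filter Topology Metric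

/-! The weak-limit half of Mosco convergence passes to the smaller spaces `V_j ⊆ W_j` for free.
For the strong half, `y ↦ infDist y (V_j)` is 1-Lipschitz uniformly in `j`, so
`infDist w (V_j) → 0` extends from the dense subspace `W̃` to all of `W`; choosing `u_j ∈ V_j`
within `infDist w (V_j) + 1/(j+1)` of `w` then gives `u_j → w`. -/

section InfDist

variable {α ι : Type*} [PseudoMetricSpace α]

theorem tendsto_infDist_zero_of_mem_closure {V : ι → Set α} {l : Filter ι} {t : Set α}
    (h : ∀ y ∈ t, Tendsto (fun j => infDist y (V j)) l (𝓝 0)) {x : α} (hx : x ∈ closure t) :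
    Tendsto (fun j => infDist x (V j)) l (𝓝 0) := by
  refine tendsto_order.2 ⟨fun a ha => Eventually.of_forall fun j => ha.trans_le infDist_nonneg,
    fun ε hε => ?_⟩
  obtain ⟨y, hy, hxy⟩ := Metric.mem_closure_iff.1 hx (ε / 2) (half_pos hε)
  filter_upwards [(tendsto_order.1 (h y hy)).2 (ε / 2) (half_pos hε)] with j hj
  calc infDist x (V j) ≤ infDist y (V j) + dist x y := infDist_le_infDist_add_dist
    _ < ε := by linarith

theorem exists_tendsto_of_tendsto_infDist_zero {V : ℕ → Set α} (hne : ∀ j, (V j).Nonempty)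
    {x : α} (h : Tendsto (fun j => infDist x (V j)) atTop (𝓝 0)) :
    ∃ u : ℕ → α, (∀ j, u j ∈ V j) ∧ Tendsto u atTop (𝓝 x) := by
  have hnear : ∀ j : ℕ, ∃ v ∈ V j, dist x v < infDist x (V j) + 1 / (j + 1) := fun j =>
    (infDist_lt_iff (hne j)).1 (lt_add_of_pos_right _ Nat.one_div_pos_of_nat)
  choose u hu hdist using hnear
  refine ⟨u, hu, tendsto_iff_dist_tendsto_zero.2 ?_⟩
  have hbound : Tendsto (fun j : ℕ => infDist x (V j) + 1 / ((j : ℝ) + 1)) atTop (𝓝 0) := by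
    simpa using h.add tendsto_one_div_add_atTop_nhds_zero_nat
  exact squeeze_zero (fun _ => dist_nonneg)
    (fun j => (dist_comm (u j) x).trans_le (hdist j).le) hbound

end InfDist

theorem stmt_15_general
    {H : Type*} [NormedAddCommGroup H] [InnerProductSpace ℂ H]
    (W : Submodule ℂ H)
    (Wj : ℕ → Submodule ℂ H)
    (hMosco₂ : ∀ (jm : ℕ → ℕ), StrictMono jm → ∀ (wm : ℕ → H) (w : H),
      (∀ m, wm m ∈ Wj (jm m)) →
      (∀ v : H, Tendsto (fun m => (inner ℂ (wm m) v : ℂ)) atTop (𝓝 (inner ℂ w v))) →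
      w ∈ W)
    (Vj : ℕ → Submodule ℂ H)
    (hVW : ∀ j, Vj j ≤ Wj j)
    (Wt : Submodule ℂ H)
    (hdense : (W : Set H) ⊆ closure (Wt : Set H))
    (happrox : ∀ w ∈ Wt, Tendsto (fun j => infDist w (Vj j : Set H)) atTop (𝓝 0)) :
    (∀ w ∈ W, ∃ u : ℕ → H, (∀ j, u j ∈ Vj j) ∧ Tendsto u atTop (𝓝 w)) ∧
    (∀ (jm : ℕ → ℕ), StrictMono jm → ∀ (wm : ℕ → H) (w : H),
      (∀ m, wm m ∈ Vj (jm m)) →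
      (∀ v : H, Tendsto (fun m => (inner ℂ (wm m) v : ℂ)) atTop (𝓝 (inner ℂ w v))) →
      w ∈ W) := by
  refine ⟨fun w hw => ?_, fun jm hjm wm w hmem hweak => ?_⟩
  · exact exists_tendsto_of_tendsto_infDist_zero (fun j => ⟨0, (Vj j).zero_mem⟩)
      (tendsto_infDist_zero_of_mem_closure happrox (hdense hw))
  · exact hMosco₂ jm hjm wm w (fun m => hVW _ (hmem m)) hweak

/-- Lemma 2.4 of Chandler-Wilde et al.: Let `(W_j)` be closed subspaces of a
Hilbert space `H` Mosco-converging to the closed subspace `W`, and let `V_j ⊆ W_j` be closed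
subspaces such that there is a dense subspace `W̃ ⊆ W` with
`inf_{v ∈ V_j} ‖w − v‖ → 0` for every `w ∈ W̃`.  Then `V_j` Mosco-converges to `W`. -/
theorem stmt_15
    {H : Type*} [NormedAddCommGroup H] [InnerProductSpace ℂ H] [CompleteSpace H]
    (W : Submodule ℂ H) (hW : IsClosed (W : Set H))
    (Wj : ℕ → Submodule ℂ H) (hWj : ∀ j, IsClosed ((Wj j : Set H)))
    (hMosco₁ : ∀ w ∈ W, ∃ u : ℕ → H, (∀ j, u j ∈ Wj j) ∧ Tendsto u atTop (𝓝 w))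
    (hMosco₂ : ∀ (jm : ℕ → ℕ), StrictMono jm → ∀ (wm : ℕ → H) (w : H),
      (∀ m, wm m ∈ Wj (jm m)) →
      (∀ v : H, Tendsto (fun m => (inner ℂ (wm m) v : ℂ)) atTop (𝓝 (inner ℂ w v))) →
      w ∈ W)
    (Vj : ℕ → Submodule ℂ H) (hVj : ∀ j, IsClosed ((Vj j : Set H)))
    (hVW : ∀ j, Vj j ≤ Wj j)
    (Wt : Submodule ℂ H) (hWt : Wt ≤ W)
    (hdense : (W : Set H) ⊆ closure (Wt : Set H))
    (happrox : ∀ w ∈ Wt, Tendsto (fun j => infDist w (Vj j : Set H)) atTop (𝓝 0)) :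
    (∀ w ∈ W, ∃ u : ℕ → H, (∀ j, u j ∈ Vj j) ∧ Tendsto u atTop (𝓝 w)) ∧
    (∀ (jm : ℕ → ℕ), StrictMono jm → ∀ (wm : ℕ → H) (w : H),
      (∀ m, wm m ∈ Vj (jm m)) →
      (∀ v : H, Tendsto (fun m => (inner ℂ (wm m) v : ℂ)) atTop (𝓝 (inner ℂ w v))) →
      w ∈ W) :=
  stmt_15_general W Wj hMosco₂ Vj hVW Wt hdense happrox
end
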